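/- arXiv:2512.10446 — 4 statements merged into one kernel-verified Lean document; each statement's English description precedes it below -/
import Mathlib

section
/- Let N ≥ 1, p ≥ 1, C ≥ 1 and s_1,…,s_p ≥ 1 be natural numbers. For each j = 1,…,p, r = 1,…,s_j and c = 1,…,C let W^{(r,c)} be an N×N real matrix whose entries lie in [0,1], whose diagonal entries are all zero, and each of whose row sums is at most 1, and define the GNAR coefficient matrices Ã_j = diag(α_{1,j},…,α_{N,j}) + Σ_{c=1}^{C} Σ_{r=1}^{s_j} β_{j,r,c} W^{(r,c)} from real parameters α_{i,j} and β_{j,r,c}. Assume the stationarity condition: for every node i = 1,…,N, Σ_{j=1}^{p} ( |α_{i,j}| + Σ_{c=1}^{C} Σ_{r=1}^{s_j} |β_{j,r,c}| ) < 1. Then for every complex number z with |z| ≤ 1, the determinant of the complex N×N matrix I + Σ_{j=1}^{p} z^j Ã_j is nonzero; equivalently, all roots of the GNAR characteristic polynomial det(I + Σ_{j=1}^{p} z^j Ã_j) lie strictly outside the closed unit disk. -/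
/-- Under the GNAR stationarity condition
`∀ i, Σ_j (|α i j| + Σ_c Σ_r |β j r c|) < 1`, the characteristic polynomial
`det (I + Σ_j z^j Ã_j)` of the GNAR filter has no roots in the closed unit disk. -/
theorem gnar_char_poly_no_roots_in_closed_unit_disk
    (N p C : ℕ) (hN : 1 ≤ N) (hp : 1 ≤ p) (hC : 1 ≤ C)
    (s : Fin p → ℕ) (hs : ∀ j, 1 ≤ s j)
    (W : (j : Fin p) → Fin (s j) → Fin C → Matrix (Fin N) (Fin N) ℝ)
    (hW01 : ∀ j r c i l, 0 ≤ W j r c i l ∧ W j r c i l ≤ 1)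
    (hWdiag : ∀ j r c i, W j r c i i = 0)
    (hWrow : ∀ j r c i, ∑ l, W j r c i l ≤ 1)
    (α : Fin N → Fin p → ℝ) (β : (j : Fin p) → Fin (s j) → Fin C → ℝ)
    (Atil : Fin p → Matrix (Fin N) (Fin N) ℝ)
    (hA : ∀ j, Atil j
      = Matrix.diagonal (fun i => α i j) + ∑ c, ∑ r, β j r c • W j r c)
    (hstat : ∀ i, ∑ j, (|α i j| + ∑ c, ∑ r, |β j r c|) < 1) :
    ∀ z : ℂ, ‖z‖ ≤ 1 →
      Matrix.det (1 + ∑ j : Fin p, z ^ (j.val + 1) •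
        (Atil j).map (Complex.ofReal)) ≠ 0 := by
  intro z hz
  apply det_ne_zero_of_sum_row_lt_diag
  intro k
  have hzpow : ∀ j : Fin p, ‖z ^ (j.val + 1)‖ ≤ 1 := fun j => by
    rw [norm_pow]; exact pow_le_one₀ (norm_nonneg z) hz
  -- entries of Atil
  have hAentry : ∀ (j : Fin p) (l : Fin N), l ≠ k →
      Atil j k l = ∑ c, ∑ r, β j r c * W j r c k l := by
    intro j l hl
    rw [hA]
    simp [Matrix.add_apply, Matrix.sum_apply, Matrix.diagonal_apply_ne' _ hl]
  have hAdiag : ∀ j : Fin p, Atil j k k = α k j := by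
    intro j
    rw [hA]
    simp [Matrix.add_apply, Matrix.sum_apply, hWdiag]
  -- diagonal lower bound
  have hdval : (1 + ∑ j : Fin p, z ^ (j.val + 1) • (Atil j).map Complex.ofReal) k k
      = 1 + ∑ j : Fin p, z ^ (j.val + 1) * (α k j : ℂ) := by
    simp [Matrix.add_apply, Matrix.sum_apply, Matrix.one_apply, Matrix.map_apply, hAdiag]
  have hdiag_lb : 1 - ∑ j, |α k j| ≤
      ‖(1 + ∑ j : Fin p, z ^ (j.val + 1) • (Atil j).map Complex.ofReal) k k‖ := by
    rw [hdval]
    have h1 : ‖∑ j : Fin p, z ^ (j.val + 1) * (α k j : ℂ)‖ ≤ ∑ j, |α k j| := by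
      refine (norm_sum_le _ _).trans (Finset.sum_le_sum fun j _ => ?_)
      rw [norm_mul, Complex.norm_real, Real.norm_eq_abs]
      exact mul_le_of_le_one_left (abs_nonneg _) (hzpow j)
    calc 1 - ∑ j, |α k j| ≤ ‖(1 : ℂ)‖ - ‖∑ j : Fin p, z ^ (j.val + 1) * (α k j : ℂ)‖ := by
          rw [norm_one]; linarith
      _ ≤ ‖1 + ∑ j : Fin p, z ^ (j.val + 1) * (α k j : ℂ)‖ := by
          have := norm_sub_norm_le (1 : ℂ) (-(∑ j : Fin p, z ^ (j.val + 1) * (α k j : ℂ)))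
          simpa [sub_neg_eq_add] using this
  -- off-diagonal bound
  have hoff : ∑ l ∈ Finset.univ.erase k,
      ‖(1 + ∑ j : Fin p, z ^ (j.val + 1) • (Atil j).map Complex.ofReal) k l‖
      ≤ ∑ j, ∑ c, ∑ r, |β j r c| := by
    have step1 : ∀ l ∈ Finset.univ.erase k,
        ‖(1 + ∑ j : Fin p, z ^ (j.val + 1) • (Atil j).map Complex.ofReal) k l‖
        ≤ ∑ j, ∑ c, ∑ r, |β j r c| * W j r c k l := by
      intro l hl
      have hlk : l ≠ k := Finset.ne_of_mem_erase hl
      have hval : (1 + ∑ j : Fin p, z ^ (j.val + 1) • (Atil j).map Complex.ofReal) k l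
          = ∑ j : Fin p, z ^ (j.val + 1) * ((Atil j k l : ℝ) : ℂ) := by
        simp [Matrix.add_apply, Matrix.sum_apply, Matrix.one_apply, Matrix.map_apply,
          Ne.symm hlk]
      rw [hval]
      calc ‖∑ j : Fin p, z ^ (j.val + 1) * ((Atil j k l : ℝ) : ℂ)‖
          ≤ ∑ j, |Atil j k l| := by
            refine (norm_sum_le _ _).trans (Finset.sum_le_sum fun j _ => ?_)
            rw [norm_mul, Complex.norm_real, Real.norm_eq_abs]
            exact mul_le_of_le_one_left (abs_nonneg _) (hzpow j)
        _ ≤ ∑ j, ∑ c, ∑ r, |β j r c| * W j r c k l := by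
            refine Finset.sum_le_sum fun j _ => ?_
            rw [hAentry j l hlk]
            refine (Finset.abs_sum_le_sum_abs _ _).trans (Finset.sum_le_sum fun c _ => ?_)
            refine (Finset.abs_sum_le_sum_abs _ _).trans (Finset.sum_le_sum fun r _ => ?_)
            rw [abs_mul, abs_of_nonneg (hW01 j r c k l).1]
    calc ∑ l ∈ Finset.univ.erase k,
        ‖(1 + ∑ j : Fin p, z ^ (j.val + 1) • (Atil j).map Complex.ofReal) k l‖
        ≤ ∑ l ∈ Finset.univ.erase k, ∑ j, ∑ c, ∑ r, |β j r c| * W j r c k l :=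
          Finset.sum_le_sum step1
      _ = ∑ j, ∑ c, ∑ r, |β j r c| * ∑ l ∈ Finset.univ.erase k, W j r c k l := by
          rw [Finset.sum_comm]
          refine Finset.sum_congr rfl fun j _ => ?_
          rw [Finset.sum_comm]
          refine Finset.sum_congr rfl fun c _ => ?_
          rw [Finset.sum_comm]
          refine Finset.sum_congr rfl fun r _ => ?_
          rw [Finset.mul_sum]
      _ ≤ ∑ j, ∑ c, ∑ r, |β j r c| := by
          refine Finset.sum_le_sum fun j _ => Finset.sum_le_sum fun c _ =>
            Finset.sum_le_sum fun r _ => ?_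
          have h1 : ∑ l ∈ Finset.univ.erase k, W j r c k l ≤ 1 := by
            refine le_trans ?_ (hWrow j r c k)
            exact Finset.sum_le_sum_of_subset_of_nonneg (Finset.erase_subset _ _)
              (fun l _ _ => (hW01 j r c k l).1)
          exact mul_le_of_le_one_right (abs_nonneg _) h1
  have hk := hstat k
  rw [Finset.sum_add_distrib] at hk
  refine hoff.trans_lt (lt_of_lt_of_le ?_ hdiag_lb)
  linarith
end

section
/- Let N ≥ 1 and let d_1,…,d_N be real numbers. For each i, let f_i ∈ ℝ[[X]] be the formal power series expansion of (1−X)^{d_i}, i.e. the series whose j-th coefficient is (−1)^j · (∏_{k=0}^{j−1} (d_i − k)) / j! for every j ≥ 0 (so the 0-th coefficient is 1). Let 𝔇 be the formal power series with N×N real matrix coefficients whose j-th coefficient is the diagonal matrix diag(coeff_j f_1, …, coeff_j f_N), and let 𝔄 be an arbitrary formal power series with N×N real matrix coefficients. Then 𝔇·𝔄 = 𝔄·𝔇 in the power series ring over N×N real matrices if and only if, for every pair of indices i,k ∈ {1,…,N}, either d_i = d_k or the (i,k) entry of the j-th coefficient of 𝔄 is zero for every j ≥ 0. -/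
/-- Let `𝔇` be the matrix power series representing the multivariate
long memory filter `(1-L)^𝐝 = diag((1-L)^{d_1},…,(1-L)^{d_N})`, whose `j`-th
coefficient is the diagonal matrix of the `j`-th coefficients of the formal expansions
of `(1-X)^{d_i}`, and let `𝔄` be an arbitrary power series with `N×N` real matrix
coefficients.  Then `𝔇` and `𝔄` commute if and only if for every pair of indices
`i, k`, either `d i = d k` or the `(i,k)` entry of every coefficient of `𝔄` vanishes. -/
theorem long_memory_filter_commutes_iff
    (N : ℕ) (hN : 1 ≤ N) (d : Fin N → ℝ)
    (f : Fin N → PowerSeries ℝ)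
    (hf : ∀ i, f i = PowerSeries.mk (fun j =>
      (-1 : ℝ) ^ j * (∏ k ∈ Finset.range j, (d i - (k : ℝ))) / (j.factorial : ℝ)))
    (𝔇 : PowerSeries (Matrix (Fin N) (Fin N) ℝ))
    (h𝔇 : 𝔇 = PowerSeries.mk (fun j =>
      Matrix.diagonal (fun i => (PowerSeries.coeff j) (f i))))
    (𝔄 : PowerSeries (Matrix (Fin N) (Fin N) ℝ)) :
    𝔇 * 𝔄 = 𝔄 * 𝔇 ↔
      ∀ i k : Fin N, d i = d k ∨
        ∀ j : ℕ, (PowerSeries.coeff j) 𝔄 i k = 0 := by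
  classical
  set g : Fin N → Fin N → PowerSeries ℝ :=
    fun i k => PowerSeries.mk (fun j => (PowerSeries.coeff j) 𝔄 i k) with hg
  have hDA : ∀ (n : ℕ) (i k : Fin N),
      ((PowerSeries.coeff n) (𝔇 * 𝔄)) i k = (PowerSeries.coeff n) (f i * g i k) := by
    intro n i k
    rw [PowerSeries.coeff_mul, PowerSeries.coeff_mul, Matrix.sum_apply]
    refine Finset.sum_congr rfl fun p _ => ?_
    rw [h𝔇]
    simp [hg, Matrix.diagonal_mul]
  have hAD : ∀ (n : ℕ) (i k : Fin N),
      ((PowerSeries.coeff n) (𝔄 * 𝔇)) i k = (PowerSeries.coeff n) (g i k * f k) := by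
    intro n i k
    rw [PowerSeries.coeff_mul, PowerSeries.coeff_mul, Matrix.sum_apply]
    refine Finset.sum_congr rfl fun p _ => ?_
    rw [h𝔇]
    simp [hg, Matrix.mul_diagonal]
  constructor
  · intro h i k
    have heq : f i * g i k = g i k * f k := by
      apply PowerSeries.ext; intro n
      rw [← hDA n i k, ← hAD n i k, h]
    rw [mul_comm (g i k)] at heq
    have hz : (f i - f k) * g i k = 0 := by
      rw [sub_mul, heq, sub_self]
    rcases mul_eq_zero.mp hz with h0 | h0
    · left
      have hfe : f i = f k := sub_eq_zero.mp h0
      rw [hf i, hf k] at hfe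
      have := congrArg (PowerSeries.coeff 1) hfe
      simp [PowerSeries.coeff_mk] at this
      linarith
    · right
      intro j
      have := congrArg (PowerSeries.coeff j) h0
      simpa [hg] using this
  · intro h
    apply PowerSeries.ext; intro n
    ext i k
    rw [hDA n i k, hAD n i k]
    rcases h i k with hd | h0
    · have hfe : f i = f k := by rw [hf i, hf k, hd]
      rw [hfe, mul_comm]
    · have : g i k = 0 := by
        apply PowerSeries.ext; intro j; simp [hg, h0 j]
      rw [this, zero_mul, mul_zero]
end

section
/- Let τ and ι be finite index sets and let M be a symmetric positive definite real matrix indexed by the disjoint union τ ⊔ ι. For a subset S ⊆ ι, write M_{ττ}, M_{τS}, M_{SS}, M_{Sτ} for the corresponding submatrices, and define the Schur complement V(S) = M_{ττ} − M_{τS} (M_{SS})^{−1} M_{Sτ} (with V(∅) = M_{ττ}); each M_{SS} is positive definite, hence invertible, and each V(S) is symmetric positive definite. Then for any subsets S₁ ⊆ S₂ ⊆ ι, the matrix V(S₁) − V(S₂) is positive semidefinite (i.e. V(S₂) ⪯ V(S₁) in the Loewner order), and consequently det V(S₂) ≤ det V(S₁). -/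
open Matrix

namespace SchurAux

variable {m n : Type} [Fintype m] [Fintype n] [DecidableEq n]

lemma ext_dot (e : m → n) (he : Function.Injective e) (w : m → ℝ) (v : n → ℝ) :
    (Function.extend e w 0) ⬝ᵥ v = w ⬝ᵥ (v ∘ e) := by
  classical
  have h0 : ∀ j ∈ Finset.univ, j ∉ Finset.univ.image e →
      Function.extend e w 0 j * v j = 0 := by
    intro j _ hj
    have hne : ¬∃ a, e a = j := by
      rintro ⟨a, rfl⟩
      exact hj (Finset.mem_image_of_mem e (Finset.mem_univ a))
    rw [Function.extend_apply' _ _ _ hne, Pi.zero_apply, zero_mul]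
  calc Function.extend e w 0 ⬝ᵥ v
      = ∑ j ∈ Finset.univ.image e, Function.extend e w 0 j * v j :=
        (Finset.sum_subset (Finset.subset_univ _) h0).symm
    _ = ∑ i, Function.extend e w 0 (e i) * v (e i) :=
        Finset.sum_image (fun a _ b _ h => he h)
    _ = ∑ i, w i * v (e i) := by simp [he.extend_apply]
    _ = w ⬝ᵥ (v ∘ e) := rfl

lemma quad_ext (M : Matrix n n ℝ) (e : m → n) (he : Function.Injective e) (w : m → ℝ) :
    Function.extend e w 0 ⬝ᵥ (M *ᵥ Function.extend e w 0) = w ⬝ᵥ (M.submatrix e e *ᵥ w) := by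
  rw [ext_dot e he]
  congr 1
  funext i
  show (M *ᵥ Function.extend e w 0) (e i) = (M.submatrix e e *ᵥ w) i
  rw [mulVec, mulVec, dotProduct_comm, ext_dot e he, dotProduct_comm]
  rfl

lemma posDef_submatrix {M : Matrix n n ℝ} (hM : M.PosDef) (e : m → n)
    (he : Function.Injective e) : (M.submatrix e e).PosDef := by
  refine posDef_iff_dotProduct_mulVec.mpr ⟨?_, fun x hx => ?_⟩
  · show (M.submatrix e e)ᴴ = _
    rw [conjTranspose_submatrix, hM.1.eq]
  · have hz : Function.extend e x 0 ≠ 0 := by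
      intro h
      apply hx
      funext i
      have := congrFun h (e i)
      rwa [he.extend_apply] at this
    have := hM.dotProduct_mulVec_pos hz
    rw [star_trivial, quad_ext M e he] at this
    rwa [star_trivial]

end SchurAux
namespace SchurAux
variable {n : Type} [Fintype n] [DecidableEq n]

lemma one_le_det_one_add {Q : Matrix n n ℝ} (hQ : Q.PosSemidef) :
    (1 : ℝ) ≤ (1 + Q).det := by
  have h1 : (1 + Q : Matrix n n ℝ).IsHermitian := isHermitian_one.add hQ.1
  rw [h1.det_eq_prod_eigenvalues]
  have hb : ∀ i ∈ (Finset.univ : Finset n), (1:ℝ) ≤ h1.eigenvalues i := by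
    intro i _
    have hv := h1.mulVec_eigenvectorBasis i
    set v : n → ℝ := ⇑(h1.eigenvectorBasis i) with hvdef
    have hvv : v ⬝ᵥ v = 1 := by
      have hnorm : ‖h1.eigenvectorBasis i‖ = 1 := h1.eigenvectorBasis.orthonormal.1 i
      have h2 : v ⬝ᵥ v = ‖h1.eigenvectorBasis i‖ ^ 2 := by
        rw [← real_inner_self_eq_norm_sq]
        simp only [dotProduct, PiLp.inner_apply, RCLike.inner_apply, hvdef, conj_trivial, mul_comm]
      rw [h2, hnorm, one_pow]
    have key : v ⬝ᵥ ((1 + Q) *ᵥ v) = h1.eigenvalues i := by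
      rw [hv]
      simp [dotProduct_smul, hvv, smul_eq_mul]
    have expand : v ⬝ᵥ ((1 + Q) *ᵥ v) = 1 + v ⬝ᵥ (Q *ᵥ v) := by
      rw [add_mulVec, one_mulVec, dotProduct_add, hvv]
    have hQv : 0 ≤ v ⬝ᵥ (Q *ᵥ v) := by simpa [star_trivial] using hQ.dotProduct_mulVec_nonneg v
    rw [← key, expand]; linarith
  simp only [RCLike.ofReal_real_eq_id, id]
  calc (1:ℝ) = ∏ _i : n, (1:ℝ) := by simp
    _ ≤ ∏ i, h1.eigenvalues i :=
        Finset.prod_le_prod (by simp) (fun i hi => by simpa using hb i hi)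

open scoped MatrixOrder in
lemma det_mono {A B : Matrix n n ℝ} (hA : A.PosDef) (hBA : (B - A).PosSemidef) :
    A.det ≤ B.det := by
  classical
  set C := CFC.sqrt A with hCdef
  have hCps : C.PosSemidef := (CFC.sqrt_nonneg A).posSemidef
  have hCC : C * C = A := CFC.sqrt_mul_sqrt_self A hA.posSemidef.nonneg
  have hdetA : 0 < A.det := hA.det_pos
  have hdetC : C.det * C.det = A.det := by rw [← det_mul, hCC]
  have hCd : IsUnit C.det := by
    rw [isUnit_iff_ne_zero]
    intro h
    rw [h, mul_zero] at hdetC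
    exact hdetA.ne' hdetC.symm
  have hCinv : C * C⁻¹ = 1 := mul_nonsing_inv C hCd
  have hCinv' : C⁻¹ * C = 1 := nonsing_inv_mul C hCd
  have hCih : (C⁻¹)ᴴ = C⁻¹ := by rw [conjTranspose_nonsing_inv, hCps.1.eq]
  set Q := C⁻¹ * (B - A) * C⁻¹ with hQdef
  have hQ : Q.PosSemidef := by
    have := hBA.conjTranspose_mul_mul_same C⁻¹
    rwa [hCih] at this
  have hB : C * (1 + Q) * C = B := by
    have h3 : C * (C⁻¹ * (B - A) * C⁻¹) * C = B - A := by
      simp only [Matrix.mul_assoc]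
      rw [hCinv', Matrix.mul_one, ← Matrix.mul_assoc, hCinv, Matrix.one_mul]
    simp only [hQdef, Matrix.mul_add, Matrix.add_mul, Matrix.mul_one, hCC]
    rw [h3]
    abel
  have h1Q := one_le_det_one_add hQ
  calc A.det = A.det * 1 := (mul_one _).symm
    _ ≤ A.det * (1 + Q).det := mul_le_mul_of_nonneg_left h1Q hdetA.le
    _ = B.det := by rw [← hB, det_mul, det_mul, ← hdetC]; ring

section Main
variable {τ ι : Type} [Fintype τ] [DecidableEq τ] [Fintype ι] [DecidableEq ι]
variable (M : Matrix (τ ⊕ ι) (τ ⊕ ι) ℝ)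

/-- embedding of `τ ⊕ ↥S` into `τ ⊕ ι` -/
def emap (S : Finset ι) : (τ ⊕ ↥S) → (τ ⊕ ι) := Sum.map id (fun b => (b : ι))

omit [Fintype τ] [DecidableEq τ] [Fintype ι] [DecidableEq ι] in
lemma emap_inj (S : Finset ι) : Function.Injective (emap (τ := τ) S) :=
  Function.Injective.sumMap Function.injective_id Subtype.coe_injective

lemma Nsub_eq (hM : M.IsHermitian) (S : Finset ι) :
    M.submatrix (emap S) (emap S) =
      fromBlocks (Matrix.of (fun a b => M (Sum.inl a) (Sum.inl b)))
        (Matrix.of (fun (a : τ) (b : ↥S) => M (Sum.inl a) (Sum.inr ↑b)))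
        (Matrix.of (fun (a : τ) (b : ↥S) => M (Sum.inl a) (Sum.inr ↑b)))ᴴ
        (Matrix.of (fun (a b : ↥S) => M (Sum.inr ↑a) (Sum.inr ↑b))) := by
  ext i j
  rcases i with a | a <;> rcases j with b | b <;>
    simp [emap, fromBlocks, submatrix_apply, conjTranspose_apply]
  simpa using hM.apply (Sum.inl b) (Sum.inr (↑a : ι))

variable {M}

def Amat : Matrix τ τ ℝ := Matrix.of fun a b => M (Sum.inl a) (Sum.inl b)
def Bmat (S : Finset ι) : Matrix τ ↥S ℝ :=
  Matrix.of fun a (b : ↥S) => M (Sum.inl a) (Sum.inr ↑b)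
def Dmat (S : Finset ι) : Matrix ↥S ↥S ℝ :=
  Matrix.of fun (a b : ↥S) => M (Sum.inr ↑a) (Sum.inr ↑b)

lemma Dmat_posDef (hM : M.PosDef) (S : Finset ι) : (Dmat (M := M) S).PosDef := by
  have h : Dmat (M := M) S
      = M.submatrix (fun a : ↥S => Sum.inr (a : ι)) (fun a : ↥S => Sum.inr (a : ι)) := rfl
  rw [h]
  exact posDef_submatrix hM _ (fun a b h => Subtype.coe_injective (Sum.inr.inj h))

lemma quad_decomp (hM : M.PosDef) (S : Finset ι) (x : τ → ℝ) (y : ↥S → ℝ) :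
    Sum.elim x y ⬝ᵥ (M.submatrix (emap S) (emap S)) *ᵥ Sum.elim x y =
      (((Dmat (M := M) S)⁻¹ * (Bmat (M := M) S)ᴴ) *ᵥ x + y) ⬝ᵥ
          (Dmat (M := M) S) *ᵥ (((Dmat (M := M) S)⁻¹ * (Bmat (M := M) S)ᴴ) *ᵥ x + y)
        + x ⬝ᵥ (Amat (M := M) - Bmat (M := M) S * (Dmat (M := M) S)⁻¹ * (Bmat (M := M) S)ᴴ) *ᵥ x := by
  haveI : Invertible (Dmat (M := M) S) :=
    (Dmat (M := M) S).invertibleOfIsUnitDet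
      (isUnit_iff_ne_zero.mpr (Dmat_posDef hM S).det_pos.ne')
  have h := schur_complement_eq₂₂ (α := ℝ) (Amat (M := M)) (Bmat (M := M) S) x y
    (Dmat_posDef hM S).1
  simp only [star_trivial] at h
  rw [Nsub_eq M hM.1 S, dotProduct_mulVec, dotProduct_mulVec, dotProduct_mulVec]
  exact h

end Main
end SchurAux

open SchurAux

/-- For a symmetric positive definite real matrix `M` indexed by the
disjoint union `τ ⊕ ι` and a subset `S ⊆ ι`, the Schur complement
`V S = M_ττ - M_τS (M_SS)⁻¹ M_Sτ` (the prediction error covariance; `V ∅ = M_ττ` since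
the correction term is an empty sum) satisfies: each `M_SS` is positive definite, each
`V S` is symmetric positive definite, and `V` is antitone in the Loewner order:
`S₁ ⊆ S₂` implies `V S₁ - V S₂` is positive semidefinite and
`det (V S₂) ≤ det (V S₁)`. -/
theorem schur_complement_monotone_in_conditioning_set
    (τ ι : Type) [Fintype τ] [DecidableEq τ] [Fintype ι] [DecidableEq ι]
    (M : Matrix (τ ⊕ ι) (τ ⊕ ι) ℝ) (hM : M.PosDef)
    (V : Finset ι → Matrix τ τ ℝ)
    (hV : ∀ S : Finset ι,
      V S = Matrix.of (fun a b => M (Sum.inl a) (Sum.inl b))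
        - (Matrix.of (fun (a : τ) (b : ↥S) => M (Sum.inl a) (Sum.inr ↑b)))
          * (Matrix.of (fun (a b : ↥S) => M (Sum.inr ↑a) (Sum.inr ↑b)))⁻¹
          * (Matrix.of (fun (a : ↥S) (b : τ) => M (Sum.inr ↑a) (Sum.inl b)))) :
    (∀ S : Finset ι,
      (Matrix.of (fun (a b : ↥S) => M (Sum.inr ↑a) (Sum.inr ↑b))).PosDef) ∧
    (∀ S : Finset ι, (V S).PosDef) ∧
    (∀ S₁ S₂ : Finset ι, S₁ ⊆ S₂ →
      (V S₁ - V S₂).PosSemidef ∧ (V S₂).det ≤ (V S₁).det) := by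
  classical
  have hD : ∀ S : Finset ι, (Dmat (M := M) S).PosDef := fun S => Dmat_posDef hM S
  have hC : ∀ S : Finset ι,
      (Matrix.of fun (a : ↥S) (b : τ) => M (Sum.inr (a : ι)) (Sum.inl b))
        = (Bmat (M := M) S)ᴴ := by
    intro S
    ext a b
    simpa [Bmat] using hM.1.apply (Sum.inl b) (Sum.inr (a : ι))
  have hV' : ∀ S : Finset ι,
      V S = Amat (M := M) - Bmat (M := M) S * (Dmat (M := M) S)⁻¹ * (Bmat (M := M) S)ᴴ := by
    intro S
    rw [hV S, hC S]
    rfl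
  -- evaluation of the quadratic form of `V S` at the optimal extension
  have main_eq : ∀ (S : Finset ι) (x : τ → ℝ),
      Sum.elim x (-(((Dmat (M := M) S)⁻¹ * (Bmat (M := M) S)ᴴ) *ᵥ x)) ⬝ᵥ
          (M.submatrix (emap S) (emap S)) *ᵥ
          Sum.elim x (-(((Dmat (M := M) S)⁻¹ * (Bmat (M := M) S)ᴴ) *ᵥ x))
        = x ⬝ᵥ (V S) *ᵥ x := by
    intro S x
    rw [quad_decomp hM S x _, add_neg_cancel, hV' S]
    simp
  have main_le : ∀ (S : Finset ι) (x : τ → ℝ) (y : ↥S → ℝ),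
      x ⬝ᵥ (V S) *ᵥ x ≤ Sum.elim x y ⬝ᵥ (M.submatrix (emap S) (emap S)) *ᵥ Sum.elim x y := by
    intro S x y
    rw [quad_decomp hM S x y, hV' S]
    have h0 : 0 ≤ (((Dmat (M := M) S)⁻¹ * (Bmat (M := M) S)ᴴ) *ᵥ x + y) ⬝ᵥ
        (Dmat (M := M) S) *ᵥ (((Dmat (M := M) S)⁻¹ * (Bmat (M := M) S)ᴴ) *ᵥ x + y) := by
      simpa [star_trivial] using (hD S).posSemidef.dotProduct_mulVec_nonneg
        (((Dmat (M := M) S)⁻¹ * (Bmat (M := M) S)ᴴ) *ᵥ x + y)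
    linarith
  have hVpd : ∀ S : Finset ι, (V S).PosDef := by
    intro S
    have hNh : (M.submatrix (emap S) (emap S)).IsHermitian := by
      show _ᴴ = _
      rw [conjTranspose_submatrix, hM.1.eq]
    refine posDef_iff_dotProduct_mulVec.mpr ⟨?_, ?_⟩
    · rw [hV' S]
      haveI : Invertible (Dmat (M := M) S) :=
        (Dmat (M := M) S).invertibleOfIsUnitDet (isUnit_iff_ne_zero.mpr (hD S).det_pos.ne')
      exact (Matrix.IsHermitian.fromBlocks₂₂ (Amat (M := M)) (Bmat (M := M) S) (hD S).1).mp
        (by rwa [Nsub_eq M hM.1 S] at hNh)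
    · intro x hx
      rw [star_trivial, ← main_eq S x,
        ← quad_ext M (emap S) (emap_inj S) (Sum.elim x (-(((Dmat (M := M) S)⁻¹ * (Bmat (M := M) S)ᴴ) *ᵥ x)))]
      have hz : Function.extend (emap S)
          (Sum.elim x (-(((Dmat (M := M) S)⁻¹ * (Bmat (M := M) S)ᴴ) *ᵥ x))) 0 ≠ 0 := by
        intro h
        apply hx
        funext a
        have := congrFun h (emap S (Sum.inl a))
        rw [(emap_inj S).extend_apply] at this
        simpa using this
      have := hM.dotProduct_mulVec_pos hz
      rwa [star_trivial] at this
  refine ⟨fun S => hD S, hVpd, ?_⟩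
  intro S₁ S₂ hsub
  have hle : ∀ x : τ → ℝ, x ⬝ᵥ (V S₂) *ᵥ x ≤ x ⬝ᵥ (V S₁) *ᵥ x := by
    intro x
    set y₁ : ↥S₁ → ℝ := -(((Dmat (M := M) S₁)⁻¹ * (Bmat (M := M) S₁)ᴴ) *ᵥ x) with hy₁
    set y₂ : ↥S₂ → ℝ := fun b => if h : (b : ι) ∈ S₁ then y₁ ⟨b, h⟩ else 0 with hy₂
    have hne : ∀ (S : Finset ι) (i : ι), i ∉ S →
        ¬ ∃ p : τ ⊕ ↥S, emap (τ := τ) S p = Sum.inr i := by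
      rintro S i hi ⟨p, hp⟩
      rcases p with a | b
      · exact absurd hp (by simp [emap])
      · have : (b : ι) = i := by simpa [emap] using hp
        exact hi (this ▸ b.2)
    have hext : Function.extend (emap S₂) (Sum.elim x y₂) 0
        = Function.extend (emap S₁) (Sum.elim x y₁) 0 := by
      funext j
      rcases j with a | i
      · have h2 := (emap_inj S₂).extend_apply (Sum.elim x y₂) 0 (Sum.inl a)
        have h1 := (emap_inj S₁).extend_apply (Sum.elim x y₁) 0 (Sum.inl a)
        exact h2.trans h1.symm
      · by_cases h2 : i ∈ S₂
        · have e2 := (emap_inj S₂).extend_apply (Sum.elim x y₂) 0 (Sum.inr ⟨i, h2⟩)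
          by_cases h1 : i ∈ S₁
          · have e1 := (emap_inj S₁).extend_apply (Sum.elim x y₁) 0 (Sum.inr ⟨i, h1⟩)
            calc Function.extend (emap S₂) (Sum.elim x y₂) 0 (Sum.inr i)
                = y₂ ⟨i, h2⟩ := e2
              _ = y₁ ⟨i, h1⟩ := dif_pos h1
              _ = Function.extend (emap S₁) (Sum.elim x y₁) 0 (Sum.inr i) := e1.symm
          · rw [Function.extend_apply' _ _ _ (hne S₁ i h1)]
            calc Function.extend (emap S₂) (Sum.elim x y₂) 0 (Sum.inr i)
                = y₂ ⟨i, h2⟩ := e2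
              _ = 0 := dif_neg h1
              _ = (0 : (τ ⊕ ι) → ℝ) (Sum.inr i) := rfl
        · rw [Function.extend_apply' _ _ _ (hne S₂ i h2),
            Function.extend_apply' _ _ _ (hne S₁ i (fun h => h2 (hsub h)))]
    calc x ⬝ᵥ (V S₂) *ᵥ x
        ≤ Sum.elim x y₂ ⬝ᵥ (M.submatrix (emap S₂) (emap S₂)) *ᵥ Sum.elim x y₂ :=
          main_le S₂ x y₂
      _ = Function.extend (emap S₂) (Sum.elim x y₂) 0 ⬝ᵥ
            M *ᵥ Function.extend (emap S₂) (Sum.elim x y₂) 0 :=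
          (quad_ext M _ (emap_inj S₂) _).symm
      _ = Function.extend (emap S₁) (Sum.elim x y₁) 0 ⬝ᵥ
            M *ᵥ Function.extend (emap S₁) (Sum.elim x y₁) 0 := by rw [hext]
      _ = Sum.elim x y₁ ⬝ᵥ (M.submatrix (emap S₁) (emap S₁)) *ᵥ Sum.elim x y₁ :=
          quad_ext M _ (emap_inj S₁) _
      _ = x ⬝ᵥ (V S₁) *ᵥ x := main_eq S₁ x
  have hps : (V S₁ - V S₂).PosSemidef := by
    refine posSemidef_iff_dotProduct_mulVec.mpr ⟨(hVpd S₁).1.sub (hVpd S₂).1, fun x => ?_⟩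
    rw [star_trivial, sub_mulVec, dotProduct_sub]
    have := hle x
    linarith
  exact ⟨hps, det_mono (hVpd S₂) hps⟩
end

section
/- Let N ≥ 1, p ≥ 1, C ≥ 1 and s_1,…,s_p ≥ 1 be natural numbers. For each j = 1,…,p, r = 1,…,s_j and c = 1,…,C let W^{(r,c)} be an N×N real matrix whose entries lie in [0,1], whose diagonal entries are all zero, and each of whose row sums is at most 1, and define the GNAR coefficient matrices Ã_j = diag(α_{1,j},…,α_{N,j}) + Σ_{c=1}^{C} Σ_{r=1}^{s_j} β_{j,r,c} W^{(r,c)} from real parameters α_{i,j} and β_{j,r,c}. Assume that for every node i = 1,…,N, Σ_{j=1}^{p} ( |α_{i,j}| + Σ_{c=1}^{C} Σ_{r=1}^{s_j} |β_{j,r,c}| ) < 1. Then for every complex number z with |z| ≤ 1, the complex matrix B(z) = Σ_{j=1}^{p} z^j Ã_j satisfies max_{1 ≤ i ≤ N} Σ_{k=1}^{N} |B(z)_{i,k}| < 1; in particular I + B(z) is invertible and its inverse equals the absolutely convergent Neumann series Σ_{m=0}^{∞} (−B(z))^m. -/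
attribute [local instance] Matrix.linftyOpNormedRing Matrix.linftyOpNormedAlgebra

/-- Under the GNAR stationarity condition, for every `z` in the closed
unit disk the matrix `B(z) = Σ_j z^j Ã_j` has all absolute row sums (hence the
maximum-absolute-row-sum operator norm) strictly below `1`; in particular `I + B(z)` is
invertible with inverse given by the absolutely convergent Neumann series
`Σ_m (-B(z))^m`. -/
theorem gnar_neumann_series_bound
    (N p C : ℕ) (hN : 1 ≤ N) (hp : 1 ≤ p) (hC : 1 ≤ C)
    (s : Fin p → ℕ) (hs : ∀ j, 1 ≤ s j)
    (W : (j : Fin p) → Fin (s j) → Fin C → Matrix (Fin N) (Fin N) ℝ)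
    (hW01 : ∀ j r c i l, 0 ≤ W j r c i l ∧ W j r c i l ≤ 1)
    (hWdiag : ∀ j r c i, W j r c i i = 0)
    (hWrow : ∀ j r c i, ∑ l, W j r c i l ≤ 1)
    (α : Fin N → Fin p → ℝ) (β : (j : Fin p) → Fin (s j) → Fin C → ℝ)
    (Atil : Fin p → Matrix (Fin N) (Fin N) ℝ)
    (hA : ∀ j, Atil j
      = Matrix.diagonal (fun i => α i j) + ∑ c, ∑ r, β j r c • W j r c)
    (hstat : ∀ i, ∑ j, (|α i j| + ∑ c, ∑ r, |β j r c|) < 1) :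
    ∀ z : ℂ, ‖z‖ ≤ 1 →
      ∀ Bz : Matrix (Fin N) (Fin N) ℂ,
        Bz = ∑ j : Fin p, z ^ (j.val + 1) • (Atil j).map (Complex.ofReal) →
          (∀ i, ∑ k, ‖Bz i k‖ < 1) ∧
          IsUnit (1 + Bz) ∧
          Summable (fun m : ℕ => ‖(-Bz) ^ m‖) ∧
          (1 + Bz)⁻¹ = ∑' m : ℕ, (-Bz) ^ m := by
  intro z hz Bz hBz
  -- row sum bound for each Atil j
  have hrow : ∀ (j : Fin p) (i : Fin N),
      ∑ k, |Atil j i k| ≤ |α i j| + ∑ c, ∑ r, |β j r c| := by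
    intro j i
    have hentry : ∀ k, |Atil j i k| ≤
        |Matrix.diagonal (fun i => α i j) i k| + ∑ c, ∑ r, |β j r c| * W j r c i k := by
      intro k
      have : Atil j i k = Matrix.diagonal (fun i => α i j) i k
          + ∑ c, ∑ r, β j r c * W j r c i k := by
        rw [hA j]; simp [Matrix.add_apply, Matrix.sum_apply, Matrix.smul_apply]
      rw [this]
      refine (abs_add_le _ _).trans (add_le_add_right ?_ _)
      refine (Finset.abs_sum_le_sum_abs _ _).trans (Finset.sum_le_sum fun c _ => ?_)
      refine (Finset.abs_sum_le_sum_abs _ _).trans (Finset.sum_le_sum fun r _ => ?_)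
      rw [abs_mul, abs_of_nonneg (hW01 j r c i k).1]
    calc ∑ k, |Atil j i k|
        ≤ ∑ k, (|Matrix.diagonal (fun i => α i j) i k|
            + ∑ c, ∑ r, |β j r c| * W j r c i k) :=
          Finset.sum_le_sum fun k _ => hentry k
      _ = (∑ k, |Matrix.diagonal (fun i => α i j) i k|)
            + ∑ k, ∑ c, ∑ r, |β j r c| * W j r c i k := Finset.sum_add_distrib
      _ ≤ |α i j| + ∑ c, ∑ r, |β j r c| := by
          refine add_le_add ?_ ?_
          · rw [Finset.sum_eq_single i]
            · simp
            · intro k _ hk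
              rw [Matrix.diagonal_apply_ne' _ hk, abs_zero]
            · simp
          · rw [Finset.sum_comm]
            refine Finset.sum_le_sum fun c _ => ?_
            rw [Finset.sum_comm]
            refine Finset.sum_le_sum fun r _ => ?_
            rw [← Finset.mul_sum]
            calc |β j r c| * ∑ k, W j r c i k ≤ |β j r c| * 1 :=
                  mul_le_mul_of_nonneg_left (hWrow j r c i) (abs_nonneg _)
              _ = |β j r c| := mul_one _
  -- main row-sum bound for Bz
  have hQ : ∀ i, ∑ k, ‖Bz i k‖ < 1 := by
    intro i
    have h1 : ∀ k, ‖Bz i k‖ ≤ ∑ j, |Atil j i k| := by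
      intro k
      have : Bz i k = ∑ j : Fin p, z ^ (j.val + 1) * ((Atil j i k : ℝ) : ℂ) := by
        rw [hBz]; simp [Matrix.sum_apply, Matrix.smul_apply, Matrix.map_apply]
      rw [this]
      refine (norm_sum_le _ _).trans (Finset.sum_le_sum fun j _ => ?_)
      rw [norm_mul, norm_pow, Complex.norm_real, Real.norm_eq_abs]
      calc ‖z‖ ^ (j.val + 1) * |Atil j i k| ≤ 1 ^ (j.val + 1) * |Atil j i k| := by
            exact mul_le_mul_of_nonneg_right
              (pow_le_pow_left₀ (norm_nonneg _) hz _) (abs_nonneg _)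
        _ = |Atil j i k| := by rw [one_pow, one_mul]
    calc ∑ k, ‖Bz i k‖ ≤ ∑ k, ∑ j, |Atil j i k| :=
          Finset.sum_le_sum fun k _ => h1 k
      _ = ∑ j, ∑ k, |Atil j i k| := Finset.sum_comm
      _ ≤ ∑ j, (|α i j| + ∑ c, ∑ r, |β j r c|) :=
          Finset.sum_le_sum fun j _ => hrow j i
      _ < 1 := hstat i
  -- operator norm bound
  have hnorm : ‖Bz‖ < 1 := by
    rw [Matrix.linfty_opNorm_def]
    have : ((Finset.univ : Finset (Fin N)).sup fun i => ∑ k, ‖Bz i k‖₊) < 1 := by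
      rw [Finset.sup_lt_iff (by norm_num : (0 : NNReal) < 1)]
      intro i _
      have := hQ i
      rw [← NNReal.coe_lt_coe]
      push_cast
      simpa [coe_nnnorm] using this
    exact_mod_cast this
  have hnorm' : ‖-Bz‖ < 1 := by rwa [norm_neg]
  have hsum : Summable (fun m : ℕ => ‖(-Bz) ^ m‖) :=
    summable_norm_geometric_of_norm_lt_one hnorm'
  have hunit : IsUnit (1 + Bz) := by
    have := isUnit_one_sub_of_norm_lt_one hnorm'
    simpa [sub_neg_eq_add] using this
  refine ⟨hQ, hunit, hsum, ?_⟩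
  rw [Matrix.nonsing_inv_eq_ringInverse]
  have := geom_series_eq_inverse (-Bz) hnorm'
  rw [sub_neg_eq_add] at this
  exact this.symm
end
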